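/- Let X be a simplicial set and ν a set of vertices of X. The simplicial map (r_ν, p_X) : J × X → J × X has image exactly the widening W_ν(X), and the induced map R_{ν,X} : J × X → W_ν(X) is a retraction of the inclusion W_ν(X) ↪ J × X; that is, the composite W_ν(X) ↪ J × X → W_ν(X) is the identity of W_ν(X). -/

import Mathlib

/-! `r_ν` only resets to `0` the coordinates of `J` lying over vertices outside `ν`, so every
vertex of its image lies in `({0} × X₀) ∪ ({1} × ν)`; on a simplex of `W_ν(X)` every
coordinate `1` already lies over `ν`, so `(r_ν, p_X)` changes nothing there. Thus
`(r_ν, p_X)` lands in `W_ν(X)` and fixes it pointwise, which gives both the image and the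
retraction. -/

open CategoryTheory Simplicial Opposite Limits

namespace Paper

/-! ## The simplicial set `J`, nerve of the free-living isomorphism -/

/-- The simplicial set `J`, the nerve of the free-living isomorphism `𝕀`:
its `n`-simplices are the tuples `{0,1}^(n+1)` (recorded as `Bool`-valued functions,
`false` being the vertex `0` and `true` the vertex `1`), with all simplicial
operators acting by reindexing. -/
def J : SSet.{0} where
  obj m := Fin (m.unop.len + 1) → Bool
  map f := TypeCat.ofHom fun a => a ∘ f.unop.toOrderHom
  map_id _ := rfl
  map_comp _ _ := rfl

/-- The two vertices `0, 1 : Δ[0] ⟶ J` of `J`; `ptJ false` is the vertex `0` and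
`ptJ true` is the vertex `1`. -/
def ptJ (b : Bool) : Δ[0] ⟶ J where
  app _ := TypeCat.ofHom fun _ _ => b
  naturality _ _ _ := rfl

/-- The boundary `∂J = {0} ∪ {1}` of `J` (two discrete points). -/
def bJ : SSet.{0} where
  obj _ := Bool
  map _ := TypeCat.ofHom fun b => b
  map_id _ := rfl
  map_comp _ _ := rfl

/-- The inclusion `∂J ↪ J`. -/
def bJIncl : bJ ⟶ J where
  app _ := TypeCat.ofHom fun b _ => b
  naturality _ _ _ := rfl

/-! ## Binary products and pushout-products -/

/-- The (pointwise) product of two simplicial sets. -/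
def sprod (X Y : SSet.{0}) : SSet.{0} where
  obj m := X.obj m × Y.obj m
  map f := TypeCat.ofHom fun p => (X.map f p.1, Y.map f p.2)
  map_id m := by
    ext p
    · exact FunctorToTypes.map_id_apply X p.1
    · exact FunctorToTypes.map_id_apply Y p.2
  map_comp f g := by
    ext p
    · exact FunctorToTypes.map_comp_apply X f g p.1
    · exact FunctorToTypes.map_comp_apply Y f g p.2

/-- The product of two morphisms of simplicial sets. -/
def sprodMap {X X' Y Y' : SSet.{0}} (f : X ⟶ X') (g : Y ⟶ Y') : sprod X Y ⟶ sprod X' Y' where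
  app m := TypeCat.ofHom fun p => (f.app m p.1, g.app m p.2)
  naturality m m' φ := by
    ext p
    refine Prod.ext ?_ ?_
    · exact NatTrans.naturality_apply f φ p.1
    · exact NatTrans.naturality_apply g φ p.2

/-- The pushout-product `f □ g : (A × Z) ∪ (B × W) ⟶ B × Z` of `f : A ⟶ B` and
`g : W ⟶ Z`, the domain being presented as the pushout `(A × Z) ∪_{A × W} (B × W)`. -/
noncomputable def pp {A B W Z : SSet.{0}} (f : A ⟶ B) (g : W ⟶ Z) :
    pushout (sprodMap (𝟙 A) g) (sprodMap f (𝟙 W)) ⟶ sprod B Z :=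
  pushout.desc (sprodMap f (𝟙 Z)) (sprodMap (𝟙 B) g) rfl

/-! ## Saturated classes of morphisms -/

/-- A class of morphisms is stable under retracts if, whenever `f` is a retract of `g`
in the arrow category, membership of `g` implies membership of `f`. -/
def StableUnderRetracts (T : MorphismProperty SSet.{0}) : Prop :=
  ∀ ⦃X Y X' Y' : SSet.{0}⦄ (f : X ⟶ Y) (g : X' ⟶ Y')
    (i : Arrow.mk f ⟶ Arrow.mk g) (r : Arrow.mk g ⟶ Arrow.mk f),
    i ≫ r = 𝟙 _ → T g → T f

/-- The inclusion functor `Set.Iio i ⥤ ι`. -/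
def iioFunctor {ι : Type} [Preorder ι] (i : ι) : Set.Iio i ⥤ ι :=
  Monotone.functor (f := Subtype.val) (fun _ _ h => h)

/-- The cocone on the restriction of `F : ι ⥤ SSet` to `Set.Iio i` with apex `F.obj i`. -/
def restrictionCocone {ι : Type} [Preorder ι] (F : ι ⥤ SSet.{0}) (i : ι) :
    Cocone (iioFunctor i ⋙ F) where
  pt := F.obj i
  ι :=
    { app := fun j => F.map (homOfLE j.2.le)
      naturality := fun j k h => by
        dsimp [iioFunctor]
        rw [← F.map_comp, Category.comp_id]
        congr 1 }

/-- A class of morphisms is stable under transfinite composition if, for every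
well-ordered type `ι` and every functor `F : ι ⥤ SSet` which is continuous at limit
stages and whose successor maps `F.obj i ⟶ F.obj (i+1)` all belong to the class, and
every colimit cocone `c` on `F`, the transfinite composite `F.obj ⊥ ⟶ c.pt` belongs to
the class. -/
def StableUnderTransfiniteComposition (T : MorphismProperty SSet.{0}) : Prop :=
  ∀ (ι : Type) [LinearOrder ι] [SuccOrder ι] [OrderBot ι] [WellFoundedLT ι]
    (F : ι ⥤ SSet.{0}),
    (∀ i : ι, ¬IsMax i → T (F.map (homOfLE (Order.le_succ i)))) →
    (∀ i : ι, Order.IsSuccLimit i → Nonempty (IsColimit (restrictionCocone F i))) →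
    ∀ (c : Cocone F), IsColimit c → T (c.ι.app ⊥)

/-- A class of morphisms of simplicial sets is saturated if it is closed under
isomorphisms, pushouts, transfinite compositions, and retracts. -/
structure IsSaturated (T : MorphismProperty SSet.{0}) : Prop where
  respectsIso : T.RespectsIso
  stableUnderCobaseChange : T.IsStableUnderCobaseChange
  stableUnderRetracts : StableUnderRetracts T
  stableUnderTransfiniteComposition : StableUnderTransfiniteComposition T

/-- The saturated closure of a class of morphisms: the smallest saturated class
containing it. -/
def satClosure (S : MorphismProperty SSet.{0}) : MorphismProperty SSet.{0} :=
  fun _ _ f => ∀ T : MorphismProperty SSet.{0}, IsSaturated T → S ≤ T → T f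

/-! ## Subcomplexes -/

/-- A subcomplex of a simplicial set. -/
structure Sub (X : SSet.{0}) where
  carrier : ∀ m, Set (X.obj m)
  map_mem : ∀ ⦃m m' : SimplexCategoryᵒᵖ⦄ (f : m ⟶ m') ⦃σ : X.obj m⦄,
    σ ∈ carrier m → X.map f σ ∈ carrier m'

/-- The simplicial set underlying a subcomplex. -/
def Sub.toSSet {X : SSet.{0}} (S : Sub X) : SSet.{0} where
  obj m := S.carrier m
  map f := TypeCat.ofHom fun σ => ⟨X.map f σ.1, S.map_mem f σ.2⟩
  map_id m := by
    ext σ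
    exact FunctorToTypes.map_id_apply X σ.1
  map_comp f g := by
    ext σ
    exact FunctorToTypes.map_comp_apply X f g σ.1

/-- The inclusion of a subcomplex. -/
def Sub.ι {X : SSet.{0}} (S : Sub X) : S.toSSet ⟶ X where
  app _ := TypeCat.ofHom fun σ => σ.1
  naturality _ _ _ := rfl

/-- Containment of subcomplexes. -/
def Sub.Le {X : SSet.{0}} (S T : Sub X) : Prop := ∀ m, S.carrier m ⊆ T.carrier m

/-- The inclusion map associated to a containment of subcomplexes. -/
def Sub.homOfLe {X : SSet.{0}} {S T : Sub X} (h : S.Le T) : S.toSSet ⟶ T.toSSet where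
  app m := TypeCat.ofHom fun σ => ⟨σ.1, h m σ.2⟩
  naturality _ _ _ := rfl

/-- The union of two subcomplexes. -/
def Sub.union {X : SSet.{0}} (S T : Sub X) : Sub X where
  carrier m := S.carrier m ∪ T.carrier m
  map_mem _ _ f _ h := h.imp (fun hs => S.map_mem f hs) (fun ht => T.map_mem f ht)

/-- The intersection of two subcomplexes. -/
def Sub.inter {X : SSet.{0}} (S T : Sub X) : Sub X where
  carrier m := S.carrier m ∩ T.carrier m
  map_mem _ _ f _ h := ⟨S.map_mem f h.1, T.map_mem f h.2⟩

/-- A subcomplex `S` of `X`, viewed as a subcomplex of (the simplicial set underlying)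
another subcomplex `T` of `X`. -/
def Sub.restrict {X : SSet.{0}} (T S : Sub X) : Sub T.toSSet where
  carrier m := {σ | σ.1 ∈ S.carrier m}
  map_mem _ _ f _ h := S.map_mem f h

/-- The (dimension zero) object of `SimplexCategoryᵒᵖ` indexing vertices. -/
abbrev V0 : SimplexCategoryᵒᵖ := Opposite.op (SimplexCategory.mk 0)

/-- The full subcomplex of `X` on a set `ν` of vertices: the simplices all of whose
vertices lie in `ν`. -/
def fullSub (X : SSet.{0}) (ν : Set (X.obj V0)) : Sub X where
  carrier m := {σ | ∀ g : SimplexCategory.mk 0 ⟶ m.unop, X.map g.op σ ∈ ν}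
  map_mem := by
    intro m m' f σ hσ g
    rw [← FunctorToTypes.map_comp_apply]
    exact hσ (g ≫ f.unop)

/-! ## Widenings and widened inclusions -/

/-- The widening `W_ν(X)` of `X` at a set `ν` of vertices: the full subcomplex of
`J × X` on the vertex set `({0} × X₀) ∪ ({1} × ν)`. -/
def wideSub (X : SSet.{0}) (ν : Set (X.obj V0)) : Sub (sprod J X) :=
  fullSub (sprod J X) {p | p.1 0 = true → p.2 ∈ ν}

/-- The subcomplex `{0} × X` of `J × X` (the full subcomplex on the vertices
`{0} × X₀`). -/
def zeroSlice (X : SSet.{0}) : Sub (sprod J X) :=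
  fullSub (sprod J X) {p | p.1 0 = false}

/-- For `A` a subcomplex of `Y`, the subcomplex `J × A` of `J × Y`. -/
def Sub.prodJ {Y : SSet.{0}} (A : Sub Y) : Sub (sprod J Y) where
  carrier m := {p | p.2 ∈ A.carrier m}
  map_mem _ _ f _ h := A.map_mem f h

/-- Given a subcomplex (inclusion) `A = X ⊆ Y` and a set `ν` of vertices of `Y`, the
subcomplex `({0} × Y) ∪ W_{ν ∩ X₀}(X)` of `J × Y`: the domain of the inclusion
`X ↪ Y` widened at `ν`. -/
def widenedSub (Y : SSet.{0}) (A : Sub Y) (ν : Set (Y.obj V0)) : Sub (sprod J Y) :=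
  (zeroSlice Y).union ((wideSub Y (ν ∩ A.carrier V0)).inter A.prodJ)

lemma zeroSlice_le_wideSub (Y : SSet.{0}) (ν : Set (Y.obj V0)) :
    (zeroSlice Y).Le (wideSub Y ν) := by
  intro m σ hσ g h
  exact absurd (hσ g) (by simp [h])

lemma wideSub_mono (Y : SSet.{0}) {ν ν' : Set (Y.obj V0)} (h : ν ⊆ ν') :
    (wideSub Y ν).Le (wideSub Y ν') :=
  fun _ σ hσ g ht => h (hσ g ht)

lemma widenedSub_le (Y : SSet.{0}) (A : Sub Y) (ν : Set (Y.obj V0)) :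
    (widenedSub Y A ν).Le (wideSub Y ν) := by
  refine fun m σ hσ => Or.elim hσ (fun h => ?_) (fun h => ?_)
  · exact zeroSlice_le_wideSub Y ν m h
  · exact wideSub_mono Y Set.inter_subset_left m h.1

/-- The inclusion `X ↪ Y` widened at `ν`: the inclusion
`({0} × Y) ∪ W_{ν ∩ X₀}(X) ↪ W_ν(Y)`. -/
def widenedIncl (Y : SSet.{0}) (A : Sub Y) (ν : Set (Y.obj V0)) :
    (widenedSub Y A ν).toSSet ⟶ (wideSub Y ν).toSSet :=
  Sub.homOfLe (widenedSub_le Y A ν)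

/-- `Wide`: the class of all widened inclusions. -/
def Wide : MorphismProperty SSet.{0} := fun _ _ h =>
  ∃ (Y : SSet.{0}) (A : Sub Y) (ν : Set (Y.obj V0)),
    Arrow.mk h = Arrow.mk (widenedIncl Y A ν)

/-- `Wide^(1)`: the class of inclusions widened at a single vertex. -/
def Wide1 : MorphismProperty SSet.{0} := fun _ _ h =>
  ∃ (Y : SSet.{0}) (A : Sub Y) (v : Y.obj V0),
    Arrow.mk h = Arrow.mk (widenedIncl Y A {v})

/-! ## Narrow vertices -/

/-- A vertex `v` of `Y` is narrow if every simplex of `Y` has at most one vertex equal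
to `v`. -/
def Narrow (Y : SSet.{0}) (v : Y.obj V0) : Prop :=
  ∀ ⦃m : SimplexCategoryᵒᵖ⦄ (σ : Y.obj m) (g g' : SimplexCategory.mk 0 ⟶ m.unop),
    Y.map g.op σ = v → Y.map g'.op σ = v → g = g'

/-- `Wide_nar`: the class of inclusions widened at a narrow set of vertices. -/
def WideNar : MorphismProperty SSet.{0} := fun _ _ h =>
  ∃ (Y : SSet.{0}) (A : Sub Y) (ν : Set (Y.obj V0)),
    (∀ v ∈ ν, Narrow Y v) ∧ Arrow.mk h = Arrow.mk (widenedIncl Y A ν)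

/-- `Wide_nar^(1)`: the class of inclusions widened at a single narrow vertex. -/
def WideNar1 : MorphismProperty SSet.{0} := fun _ _ h =>
  ∃ (Y : SSet.{0}) (A : Sub Y) (v : Y.obj V0),
    Narrow Y v ∧ Arrow.mk h = Arrow.mk (widenedIncl Y A {v})

/-! ## Standard simplices, boundaries, skeleta, iso-horns -/

/-- The unique map to the terminal simplicial set `Δ[0]`. -/
def toPt (X : SSet.{0}) : X ⟶ Δ[0] where
  app m := TypeCat.ofHom fun _ => SSet.stdSimplex.const 0 0 m
  naturality m m' f := by
    ext x
    apply SSet.stdSimplex.objEquiv.injective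
    apply SimplexCategory.Hom.ext
    apply OrderHom.ext
    funext j
    exact Subsingleton.elim (α := Fin 1) _ _

/-- The `i`-th vertex of the standard simplex `Δ[n]`. -/
def vrt (n : ℕ) (i : Fin (n + 1)) : Δ[n].obj V0 :=
  SSet.stdSimplex.const n i V0

/-- The boundary `∂Δ[n]`, as a subcomplex of `Δ[n]`: the simplices which are not
surjective as monotone maps. -/
def bSub (n : ℕ) : Sub Δ[n] where
  carrier m := {σ | ¬Function.Surjective (SSet.stdSimplex.asOrderHom σ)}
  map_mem _ _ f σ hσ h := hσ (Function.Surjective.of_comp h)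

/-- The `k`-skeleton of `Y`, as a subcomplex: the simplices which factor through some
simplex of dimension at most `k`. -/
def skSub (Y : SSet.{0}) (k : ℕ) : Sub Y where
  carrier m := {σ | ∃ (j : ℕ) (_ : j ≤ k) (f : m.unop ⟶ SimplexCategory.mk j)
    (τ : Y.obj (Opposite.op (SimplexCategory.mk j))), Y.map f.op τ = σ}
  map_mem := by
    rintro m m' φ σ ⟨j, hj, f, τ, rfl⟩
    exact ⟨j, hj, φ.unop ≫ f, τ, by rw [← FunctorToTypes.map_comp_apply]; rfl⟩

/-- A `k`-simplex is nondegenerate if it admits no factorization through a simplex of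
strictly smaller dimension. -/
def Nondegenerate (Y : SSet.{0}) {k : ℕ} (σ : Y.obj (Opposite.op (SimplexCategory.mk k))) :
    Prop :=
  ∀ (j : ℕ) (f : SimplexCategory.mk k ⟶ SimplexCategory.mk j)
    (τ : Y.obj (Opposite.op (SimplexCategory.mk j))), Y.map f.op τ = σ → k ≤ j

/-- The iso-horn inclusion `𝕍_i[m+1] ↪ ∇̄_i[m+1]`: the boundary inclusion
`∂Δ[m] ↪ Δ[m]` widened at the single vertex `i`, i.e. the inclusion
`({0} × Δ[m]) ∪ W_i(∂Δ[m]) ↪ W_i(Δ[m])` of the iso-horn into the isoplex. -/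
def isoHornIncl (m : ℕ) (i : Fin (m + 1)) :
    (widenedSub Δ[m] (bSub m) {vrt m i}).toSSet ⟶ (wideSub Δ[m] {vrt m i}).toSSet :=
  widenedIncl Δ[m] (bSub m) {vrt m i}

/-- `IsoHorn`: the class of all iso-horn inclusions. -/
def IsoHorn : MorphismProperty SSet.{0} := fun _ _ h =>
  ∃ (m : ℕ) (i : Fin (m + 1)), Arrow.mk h = Arrow.mk (isoHornIncl m i)

/-! ## The classes `({0} ↪ J) □ Bdry` and `({0} ↪ J) □ Mono` -/

/-- The class `({0} ↪ J) □ Bdry` of pushout-products of the vertex `0 : Δ[0] ⟶ J`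
with the boundary inclusions `∂Δ[n] ↪ Δ[n]`. -/
def ppJ0Bdry : MorphismProperty SSet.{0} := fun _ _ h =>
  ∃ n : ℕ, Arrow.mk h = Arrow.mk (pp (ptJ false) (SSet.boundary.{0} n).ι)

/-- The class `({0} ↪ J) □ Mono` of pushout-products of the vertex `0 : Δ[0] ⟶ J`
with all monomorphisms of simplicial sets. -/
def ppJ0Mono : MorphismProperty SSet.{0} := fun _ _ h =>
  ∃ (W Z : SSet.{0}) (g : W ⟶ Z), Mono g ∧ Arrow.mk h = Arrow.mk (pp (ptJ false) g)


/-- The partial projection `r_ν : J × X ⟶ J`: at a simplex `((a₀,…,aₖ), σ)` it keeps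
`aᵢ` when the `i`-th vertex of `σ` is in `ν` and returns `0` (i.e. `false`)
otherwise. -/
noncomputable def rnu (X : SSet.{0}) (ν : Set (X.obj V0)) : sprod J X ⟶ J where
  app m := TypeCat.ofHom fun p => fun i => by
    classical
    exact if X.map (SimplexCategory.const (SimplexCategory.mk 0) m.unop i).op p.2 ∈ ν
      then p.1 i else false
  naturality m m' f := by
    classical
    ext p
    funext i
    have h : X.map (SimplexCategory.const (SimplexCategory.mk 0) m'.unop i).op (X.map f p.2)
        = X.map (SimplexCategory.const (SimplexCategory.mk 0) m.unop
            (f.unop.toOrderHom i)).op p.2 := by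
      rw [← FunctorToTypes.map_comp_apply, ← SimplexCategory.const_comp]
      rfl
    exact congrArg (fun c => if c ∈ ν then p.1 (f.unop.toOrderHom i) else false) h

/-- The map `(r_ν, p_X) : J × X ⟶ J × X` whose first component is the partial projection
`r_ν` and whose second component is the projection `p_X`. -/
noncomputable def rp (X : SSet.{0}) (ν : Set (X.obj V0)) : sprod J X ⟶ sprod J X where
  app m := TypeCat.ofHom fun p => ((rnu X ν).app m p, p.2)
  naturality m m' f := by
    ext p
    refine Prod.ext ?_ rfl
    exact NatTrans.naturality_apply (rnu X ν) f p

namespace Sub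

variable {X Y : SSet.{0}} (S : Sub X)

def lift (f : Y ⟶ X) (hf : ∀ m y, f.app m y ∈ S.carrier m) : Y ⟶ S.toSSet where
  app m := TypeCat.ofHom fun y => ⟨f.app m y, hf m y⟩
  naturality _ _ φ := by
    ext y
    have h := NatTrans.naturality_apply f φ y
    exact Subtype.ext h

@[simp]
lemma lift_ι (f : Y ⟶ X) (hf : ∀ m y, f.app m y ∈ S.carrier m) : S.lift f hf ≫ S.ι = f :=
  rfl

lemma ι_lift_eq_id {f : X ⟶ X} (hf : ∀ m y, f.app m y ∈ S.carrier m)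
    (hfix : ∀ m σ, σ ∈ S.carrier m → f.app m σ = σ) : S.ι ≫ S.lift f hf = 𝟙 _ := by
  ext m σ
  exact Subtype.ext (hfix m σ.1 σ.2)

lemma range_app_eq {f : X ⟶ X} (hf : ∀ m y, f.app m y ∈ S.carrier m)
    (hfix : ∀ m σ, σ ∈ S.carrier m → f.app m σ = σ) (m : SimplexCategoryᵒᵖ) :
    Set.range (f.app m) = S.carrier m :=
  (Set.range_subset_iff.2 (hf m)).antisymm fun σ hσ => ⟨σ, hfix m σ hσ⟩

end Sub

section Retraction

variable (X : SSet.{0}) (ν : Set (X.obj V0)) {m : SimplexCategoryᵒᵖ} (p : (sprod J X).obj m)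
  (i : Fin (m.unop.len + 1))

lemma rnu_app_of_mem (h : X.map (SimplexCategory.const _ m.unop i).op p.2 ∈ ν) :
    (rnu X ν).app m p i = p.1 i :=
  if_pos h

lemma rnu_app_of_not_mem (h : X.map (SimplexCategory.const _ m.unop i).op p.2 ∉ ν) :
    (rnu X ν).app m p i = false :=
  if_neg h

lemma rp_app_mem_wideSub : (rp X ν).app m p ∈ (wideSub X ν).carrier m := by
  intro g hg
  rw [SimplexCategory.eq_const_of_zero g]
  by_contra hν
  exact Bool.false_ne_true ((rnu_app_of_not_mem X ν p _ hν).symm.trans hg)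

lemma rp_app_of_mem_wideSub (hp : p ∈ (wideSub X ν).carrier m) : (rp X ν).app m p = p := by
  refine Prod.ext (funext fun i => ?_) rfl
  by_cases hν : X.map (SimplexCategory.const _ m.unop i).op p.2 ∈ ν
  · exact rnu_app_of_mem X ν p i hν
  · have hi : p.1 i = false := by
      by_contra h
      exact hν (hp (SimplexCategory.const _ m.unop i) (Bool.not_eq_false _ ▸ h))
    exact (rnu_app_of_not_mem X ν p i hν).trans hi.symm

end Retraction

/-- The map `(r_ν, p_X) : J × X ⟶ J × X` has image exactly the
widening `W_ν(X)`, and the induced map `R_{ν,X} : J × X ⟶ W_ν(X)` (the corestriction of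
`(r_ν, p_X)`) is a retraction of the inclusion `W_ν(X) ↪ J × X`. -/
theorem rp_image_eq_wideSub_and_retraction (X : SSet.{0}) (ν : Set (X.obj V0)) :
    (∀ m, Set.range ((rp X ν).app m) = (wideSub X ν).carrier m) ∧
      ∃ R : sprod J X ⟶ (wideSub X ν).toSSet,
        R ≫ (wideSub X ν).ι = rp X ν ∧ (wideSub X ν).ι ≫ R = 𝟙 _ := by
  have hmem : ∀ m p, (rp X ν).app m p ∈ (wideSub X ν).carrier m :=
    fun _ => rp_app_mem_wideSub X ν
  have hfix : ∀ m p, p ∈ (wideSub X ν).carrier m → (rp X ν).app m p = p :=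
    fun _ => rp_app_of_mem_wideSub X ν
  exact ⟨(wideSub X ν).range_app_eq hmem hfix, (wideSub X ν).lift (rp X ν) hmem,
    Sub.lift_ι _ _ _, Sub.ι_lift_eq_id _ hmem hfix⟩

end Paper
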